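/- Let M ≥ 2 be an integer, η ∈ ℝ, and ϑ ∈ (−π/2, π/2). Consider the elevation cut θ ↦ f(η, θ; η, ϑ) of the sUPA array factor. Then f(η, ϑ + arcsin(2/M); η, ϑ) = 0 and f(η, ϑ − arcsin(2/M); η, ϑ) = 0, while f(η, θ; η, ϑ) ≠ 0 for every θ with |θ − ϑ| < arcsin(2/M). Consequently the null-to-null elevation beamwidth of the main lobe equals 2·arcsin(2/M), independently of η and ϑ. -/

import Mathlib

/-!
On the cut `φ = η` the first Dirichlet factor is `H_M(0) = 1` and the second argument collapses
to `sin (θ - ϑ)`, so the cut is `M² H_M(sin (θ - ϑ))`. Summing the geometric series,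
`H_M(x) = 0` iff `exp (iπx)` is an `M`-th root of unity other than `1`, i.e. iff `Mx/2` is an
integer and `x/2` is not. The zero of `H_M` closest to `0` is therefore at `|x| = 2/M`, and
`|sin (θ - ϑ)| = 2/M` first happens at `|θ - ϑ| = arcsin (2/M)`.
-/

open Real Complex Finset

/-- The Dirichlet kernel `H_M(x) = (1/M) ∑_{m=0}^{M-1} exp(iπ m x)`. -/
noncomputable def dirichletKernel (M : ℕ) (x : ℝ) : ℂ :=
  (1 / (M : ℂ)) * ∑ m ∈ Finset.range M, Complex.exp (Complex.I * (Real.pi : ℂ) * (m : ℂ) * (x : ℂ))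

/-- The sUPA array factor
`f(φ,θ;η,ϑ) = M² H_M(cos θ sin(φ−η)) H_M(sin θ cos ϑ − cos θ sin ϑ cos(φ−η))`. -/
noncomputable def sUPAFactor (M : ℕ) (φ θ η ϑ : ℝ) : ℂ :=
  (M : ℂ) ^ 2 * dirichletKernel M (Real.cos θ * Real.sin (φ - η)) *
    dirichletKernel M (Real.sin θ * Real.cos ϑ - Real.cos θ * Real.sin ϑ * Real.cos (φ - η))

theorem geom_sum_eq_zero_iff_pow_eq_one {K : Type*} [Field K] [CharZero K] {z : K} {n : ℕ}
    (hn : n ≠ 0) : ∑ i ∈ range n, z ^ i = 0 ↔ z ^ n = 1 ∧ z ≠ 1 := by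
  by_cases hz : z = 1
  · simp [hz, hn]
  · rw [geom_sum_eq hz, div_eq_zero_iff, sub_eq_zero, sub_eq_zero]
    tauto

theorem Complex.exp_I_pi_mul_eq_one_iff (x : ℝ) : exp (I * π * x) = 1 ↔ ∃ k : ℤ, x = 2 * k := by
  have hIπ : I * (π : ℂ) ≠ 0 := mul_ne_zero I_ne_zero (ofReal_ne_zero.mpr pi_ne_zero)
  rw [Complex.exp_eq_one_iff]
  refine exists_congr fun k => ⟨fun hk => ?_, fun hk => by rw [hk]; push_cast; ring⟩
  exact_mod_cast mul_left_cancel₀ hIπ (by linear_combination hk : I * π * (x : ℂ) = I * π * (2 * k))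

theorem dirichletKernel_eq_inv_mul_geom_sum (M : ℕ) (x : ℝ) :
    dirichletKernel M x = (M : ℂ)⁻¹ * ∑ m ∈ range M, exp (I * π * x) ^ m := by
  rw [dirichletKernel, one_div]
  congr 1
  refine sum_congr rfl fun m _ => ?_
  rw [← Complex.exp_nat_mul]
  ring_nf

theorem dirichletKernel_zero {M : ℕ} (hM : M ≠ 0) : dirichletKernel M 0 = 1 := by
  simp [dirichletKernel, hM]

theorem dirichletKernel_eq_zero_iff {M : ℕ} (hM : M ≠ 0) (x : ℝ) :
    dirichletKernel M x = 0 ↔ (∃ k : ℤ, M * x = 2 * k) ∧ ¬ ∃ k : ℤ, x = 2 * k := by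
  rw [dirichletKernel_eq_inv_mul_geom_sum, mul_eq_zero, inv_eq_zero, Nat.cast_eq_zero,
    or_iff_right hM, geom_sum_eq_zero_iff_pow_eq_one hM, ← Complex.exp_nat_mul, Ne,
    Complex.exp_I_pi_mul_eq_one_iff, ← Complex.exp_I_pi_mul_eq_one_iff (M * x)]
  push_cast
  ring_nf

theorem dirichletKernel_eq_zero_of_abs_eq {M : ℕ} (hM : 2 ≤ M) {x : ℝ} (hx : |x| = 2 / M) :
    dirichletKernel M x = 0 := by
  have hMpos : (0 : ℝ) < M := by positivity
  have hM2 : (2 : ℝ) ≤ M := by exact_mod_cast hM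
  rw [dirichletKernel_eq_zero_iff (by omega)]
  constructor
  · rcases abs_eq (by positivity) |>.mp hx with h | h
    · exact ⟨1, by rw [h]; field_simp; norm_num⟩
    · exact ⟨-1, by rw [h]; field_simp; norm_num⟩
  · rintro ⟨k, rfl⟩
    rcases eq_or_ne k 0 with rfl | hk
    · simp only [Int.cast_zero, mul_zero, abs_zero] at hx
      exact (div_pos two_pos hMpos).ne' hx.symm
    · have : (1 : ℝ) ≤ |(k : ℝ)| := by exact_mod_cast Int.one_le_abs hk
      rw [abs_mul, abs_two] at hx
      have : 2 / (M : ℝ) ≤ 1 := by rw [div_le_one hMpos]; exact hM2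
      linarith

theorem dirichletKernel_ne_zero_of_abs_lt {M : ℕ} {x : ℝ} (hx : |x| < 2 / M) :
    dirichletKernel M x ≠ 0 := by
  rcases eq_or_ne M 0 with rfl | hM
  · simp only [Nat.cast_zero, div_zero] at hx
    exact absurd hx (abs_nonneg x).not_gt
  have hMpos : (0 : ℝ) < M := by positivity
  rw [Ne, dirichletKernel_eq_zero_iff hM]
  rintro ⟨⟨k, hk⟩, hx2⟩
  rcases eq_or_ne k 0 with rfl | hk0
  · exact hx2 ⟨0, by simpa [hMpos.ne'] using hk⟩
  · have : (1 : ℝ) ≤ |(k : ℝ)| := by exact_mod_cast Int.one_le_abs hk0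
    have : |x| * M = 2 * |(k : ℝ)| := by
      rw [← Nat.abs_cast M, ← abs_mul, mul_comm, hk, abs_mul, abs_two]
    rw [lt_div_iff₀ hMpos] at hx
    linarith

theorem Real.abs_sin_lt_of_abs_lt_arcsin {t y : ℝ} (h : |t| < arcsin y) : |sin t| < y := by
  have ht : |t| ∈ Set.Ico (-(π / 2)) (π / 2) :=
    ⟨by linarith [abs_nonneg t, pi_pos], h.trans_le (arcsin_le_pi_div_two y)⟩
  rw [abs_sin_eq_sin_abs_of_abs_le_pi (by linarith [ht.2, pi_pos])]
  exact (lt_arcsin_iff_sin_lt' ht).mp h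

theorem sUPAFactor_elevation_cut {M : ℕ} (hM : M ≠ 0) (η ϑ θ : ℝ) :
    sUPAFactor M η θ η ϑ = (M : ℂ) ^ 2 * dirichletKernel M (Real.sin (θ - ϑ)) := by
  rw [sUPAFactor, sub_self, Real.sin_zero, Real.cos_zero, mul_zero, mul_one, ← Real.sin_sub,
    dirichletKernel_zero hM, mul_one]

theorem sUPA_elevation_beamwidth_general (M : ℕ) (hM : 2 ≤ M) (η : ℝ) (ϑ : ℝ) :
    sUPAFactor M η (ϑ + Real.arcsin (2 / M)) η ϑ = 0 ∧
    sUPAFactor M η (ϑ - Real.arcsin (2 / M)) η ϑ = 0 ∧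
    ∀ θ : ℝ, |θ - ϑ| < Real.arcsin (2 / M) → sUPAFactor M η θ η ϑ ≠ 0 := by
  have hM0 : M ≠ 0 := by omega
  have h2M : (2 : ℝ) / M ∈ Set.Icc 0 1 :=
    ⟨by positivity, by rw [div_le_one (by positivity)]; exact_mod_cast hM⟩
  have hsin : |Real.sin (Real.arcsin (2 / M))| = 2 / M := by
    rw [Real.sin_arcsin (by linarith [h2M.1]) h2M.2, abs_of_nonneg h2M.1]
  have hnull : ∀ θ, |Real.sin (θ - ϑ)| = 2 / M → sUPAFactor M η θ η ϑ = 0 := fun θ h => by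
    rw [sUPAFactor_elevation_cut hM0, dirichletKernel_eq_zero_of_abs_eq hM h, mul_zero]
  refine ⟨hnull _ ?_, hnull _ ?_, fun θ hθ => ?_⟩
  · rwa [add_sub_cancel_left]
  · rwa [sub_sub_cancel_left, Real.sin_neg, abs_neg]
  · rw [sUPAFactor_elevation_cut hM0]
    exact mul_ne_zero (by simp [hM0])
      (dirichletKernel_ne_zero_of_abs_lt (Real.abs_sin_lt_of_abs_lt_arcsin hθ))

/-- Elevation cut of the sUPA array factor: the first nulls around the peak `θ = ϑ` lie
exactly at `θ = ϑ ± arcsin(2/M)`, and there is no null strictly inside; hence the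
null-to-null elevation beamwidth equals `2 arcsin(2/M)`, independently of `η` and `ϑ`. -/
theorem sUPA_elevation_beamwidth (M : ℕ) (hM : 2 ≤ M) (η : ℝ) (ϑ : ℝ)
    (hϑ : ϑ ∈ Set.Ioo (-(Real.pi / 2)) (Real.pi / 2)) :
    sUPAFactor M η (ϑ + Real.arcsin (2 / M)) η ϑ = 0 ∧
    sUPAFactor M η (ϑ - Real.arcsin (2 / M)) η ϑ = 0 ∧
    ∀ θ : ℝ, |θ - ϑ| < Real.arcsin (2 / M) → sUPAFactor M η θ η ϑ ≠ 0 :=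
  sUPA_elevation_beamwidth_general M hM η ϑ
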